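/- arXiv:2505.19252 — 11 statements merged into one kernel-verified Lean document; each statement's English description precedes it below -/
import Mathlib

section
/- For every λ ∈ [0,1], G(λ) := λ(1−λ) + (e^{λ−1} − λ)·ln(1 − λ·e^{1−λ}) ≥ 0, with the convention that at λ = 1 the second term is interpreted as 0 (indeed λe^{1−λ} < 1 for λ < 1, and G(1) = 0). -/
/-!
Put `x = λ e^{1-λ}`, which lies in `[0, 1)` for `λ ∈ [0, 1)`. Since `e^{λ-1} - λ = e^{λ-1} (1 - x)`,
`G(λ) = λ(1-λ) + e^{λ-1} (1-x) log (1-x)`, and `(1-x) log (1-x) + x = ∑_{n ≥ 2} xⁿ / (n(n-1))`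
is a series of nonnegative terms. Keeping the terms up to `x⁴` gives
`G(λ) ≥ λ² (E/2 + λE²/6 + λ²E³/12 - 1)` with `E = e^{1-λ}`, which is nonnegative for `λ ≤ 3/5`.
No truncation works near `λ = 1`, where `G(1) = 0` uses the whole series, so there we write
`u = 1 - λ` and use `1 - x ≥ u²/2` and `0 ≤ e^{λ-1} - λ ≤ u²/2`, whence
`G(λ) ≥ λu + (u²/2) log (u²/2) ≥ (u/2)(1 - 3u log 2) ≥ 0`.
-/

open Real

noncomputable def G (l : ℝ) : ℝ :=
  l * (1 - l) + (exp (l - 1) - l) * log (1 - l * exp (1 - l))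

theorem hasSum_one_sub_mul_log_one_sub {x : ℝ} (hx : |x| < 1) :
    HasSum (fun n : ℕ => x ^ (n + 2) / ((n + 1) * (n + 2))) ((1 - x) * log (1 - x) + x) := by
  have hlog := hasSum_pow_div_log_of_abs_lt_one hx
  have hshift : HasSum (fun n : ℕ => x ^ (n + 2) / (n + 2)) (-log (1 - x) - x) := by
    simpa [add_assoc, one_add_one_eq_two] using (hasSum_nat_add_iff' 1).mpr hlog
  have hterm (n : ℕ) : x ^ (n + 2) / ((n + 1) * (n + 2))
      = x * (x ^ (n + 1) / (n + 1)) - x ^ (n + 2) / (n + 2) := by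
    field_simp
    ring
  simp_rw [hterm]
  rw [show (1 - x) * log (1 - x) + x = x * -log (1 - x) - (-log (1 - x) - x) by ring]
  exact (hlog.mul_left x).sub hshift

theorem le_one_sub_mul_log_one_sub {x : ℝ} (h0 : 0 ≤ x) (h1 : x < 1) :
    -x + x ^ 2 / 2 + x ^ 3 / 6 + x ^ 4 / 12 ≤ (1 - x) * log (1 - x) := by
  have hsum := hasSum_one_sub_mul_log_one_sub (abs_lt.mpr ⟨by linarith, h1⟩)
  have := sum_le_hasSum (Finset.range 3) (fun n _ => by positivity) hsum
  norm_num [Finset.sum_range_succ] at this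
  linarith

theorem one_sub_mul_exp_le {u : ℝ} (hu : 0 ≤ u) : (1 - u) * exp u ≤ 1 - u ^ 2 / 2 := by
  have hmono : Monotone fun t => 1 - t ^ 2 / 2 - (1 - t) * exp t := by
    refine monotone_of_hasDerivAt_nonneg (f' := fun t => t * (exp t - 1)) (fun t => ?_) fun t => ?_
    · have := (((hasDerivAt_pow 2 t).div_const 2).const_sub 1).sub
        (((hasDerivAt_id' t).const_sub 1).mul (hasDerivAt_exp t))
      exact this.congr_deriv (by push_cast; ring)
    · rcases le_total 0 t with ht | ht
      · exact mul_nonneg ht (by linarith [add_one_le_exp t])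
      · exact mul_nonneg_of_nonpos_of_nonpos ht (by linarith [exp_le_one_iff.mpr ht])
  simpa using hmono hu

theorem exp_neg_le_quadratic {u : ℝ} (hu : 0 ≤ u) : exp (-u) ≤ 1 - u + u ^ 2 / 2 := by
  have hq := quadratic_le_exp_of_nonneg hu
  rw [exp_neg, inv_le_iff_one_le_mul₀ (exp_pos u)]
  -- `(1 - u + u²/2)(1 + u + u²/2) = 1 + u⁴/4`
  nlinarith [pow_nonneg hu 4, mul_le_mul_of_nonneg_left hq (by nlinarith : (0:ℝ) ≤ 1 - u + u ^ 2 / 2)]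

theorem le_log_sq_div_two {u : ℝ} (hu : 0 < u) : 2 - u⁻¹ - 3 * log 2 ≤ log (u ^ 2 / 2) := by
  have hsplit : log (u ^ 2 / 2) = 2 * log (2 * u) - 3 * log 2 := by
    rw [show u ^ 2 / 2 = (2 * u) ^ 2 / 2 ^ 3 by ring, log_div (by positivity) (by positivity),
      log_pow, log_pow]
    push_cast
    ring
  have h2u := one_sub_inv_le_log_of_pos (show 0 < 2 * u by positivity)
  rw [mul_inv] at h2u
  rw [hsplit]
  linarith

theorem mul_exp_one_sub_lt_one {l : ℝ} (hl : l ≠ 1) : l * exp (1 - l) < 1 := by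
  have hlt : l < exp (l - 1) := by linarith [add_one_lt_exp (sub_ne_zero.mpr hl)]
  calc l * exp (1 - l) < exp (l - 1) * exp (1 - l) := by gcongr
    _ = 1 := by rw [← exp_add]; simp

theorem exp_sub_one_sub_eq_mul (l : ℝ) :
    exp (l - 1) - l = exp (l - 1) * (1 - l * exp (1 - l)) := by
  rw [mul_one_sub, ← mul_assoc, mul_comm _ l, mul_assoc, ← exp_add]
  simp

theorem G_nonneg_of_le {l : ℝ} (hl0 : 0 ≤ l) (hl : l ≤ 3 / 5) : 0 ≤ G l := by
  set E := exp (1 - l) with hE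
  have hcE : exp (l - 1) * E = 1 := by rw [hE, ← exp_add]; simp
  have hQ : 2 - l + (1 - l) ^ 2 / 2 ≤ E := by
    linarith [quadratic_le_exp_of_nonneg (x := 1 - l) (by linarith)]
  have hsum : 1 ≤ E / 2 + l * E ^ 2 / 6 + l ^ 2 * E ^ 3 / 12 := by
    have ht : 0 ≤ 3 / 5 - l := by linarith
    calc (1 : ℝ) ≤ (2 - l + (1 - l) ^ 2 / 2) / 2 + l * (2 - l + (1 - l) ^ 2 / 2) ^ 2 / 6
          + l ^ 2 * (2 - l + (1 - l) ^ 2 / 2) ^ 3 / 12 := by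
          linarith [mul_nonneg hl0 ht, mul_nonneg (mul_nonneg ht ht) hl0, pow_nonneg ht 3,
            pow_nonneg ht 4, pow_nonneg ht 5, pow_nonneg ht 6, pow_nonneg ht 7, pow_nonneg ht 8]
      _ ≤ E / 2 + l * E ^ 2 / 6 + l ^ 2 * E ^ 3 / 12 := by
          have : 0 ≤ 2 - l + (1 - l) ^ 2 / 2 := by nlinarith
          gcongr
  have hseries := le_one_sub_mul_log_one_sub (x := l * E) (by positivity)
    (mul_exp_one_sub_lt_one (by linarith))
  rw [G, exp_sub_one_sub_eq_mul, mul_assoc]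
  calc 0 ≤ l ^ 2 * (E / 2 + l * E ^ 2 / 6 + l ^ 2 * E ^ 3 / 12 - 1) := by
        have := sub_nonneg.mpr hsum
        positivity
    _ = l * (1 - l) + exp (l - 1) * (-(l * E) + (l * E) ^ 2 / 2 + (l * E) ^ 3 / 6
          + (l * E) ^ 4 / 12) := by
        linear_combination (l - l ^ 2 * E / 2 - l ^ 3 * E ^ 2 / 6 - l ^ 4 * E ^ 3 / 12) * hcE
    _ ≤ _ := by gcongr

theorem G_nonneg_of_ge {l : ℝ} (hl : 3 / 5 ≤ l) (hl1 : l < 1) : 0 ≤ G l := by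
  obtain ⟨u, rfl⟩ : ∃ u, l = 1 - u := ⟨1 - l, by ring⟩
  have hu0 : 0 < u := by linarith
  rw [G, show 1 - u - 1 = -u by ring, show 1 - (1 - u) = u by ring]
  set y := 1 - (1 - u) * exp u
  have hy : u ^ 2 / 2 ≤ y := by linarith [one_sub_mul_exp_le hu0.le]
  have hlogy : log y ≤ 0 :=
    log_nonpos ((by positivity : (0 : ℝ) ≤ u ^ 2 / 2).trans hy) (by nlinarith [exp_pos u])
  have hc : exp (-u) - (1 - u) ≤ u ^ 2 / 2 := by linarith [exp_neg_le_quadratic hu0.le]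
  calc 0 ≤ u / 2 * (1 - 3 * u * log 2) := by
        have : 3 * u * log 2 ≤ 1 := by nlinarith [log_two_lt_d9]
        nlinarith
    _ = (1 - u) * u + u ^ 2 / 2 * (2 - u⁻¹ - 3 * log 2) := by field_simp; ring
    _ ≤ (1 - u) * u + u ^ 2 / 2 * log (u ^ 2 / 2) := by gcongr; exact le_log_sq_div_two hu0
    _ ≤ (1 - u) * u + u ^ 2 / 2 * log y := by gcongr
    _ ≤ (1 - u) * u + (exp (-u) - (1 - u)) * log y := by
        linarith [mul_le_mul_of_nonpos_right hc hlogy]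

theorem stmt_3 (l : ℝ) (hl : l ∈ Set.Icc (0 : ℝ) 1) :
    l * (1 - l) + (Real.exp (l - 1) - l) * Real.log (1 - l * Real.exp (1 - l)) ≥ 0 := by
  obtain ⟨hl0, hl1⟩ := hl
  rcases le_or_gt l (3 / 5) with hA | hB
  · exact G_nonneg_of_le hl0 hA
  rcases hl1.lt_or_eq with hB1 | rfl
  · exact G_nonneg_of_ge hB.le hB1
  · norm_num
end

section
/- For every λ ∈ [0,1] and z ∈ [0,1], (e^{λ−1} − λ)/(1−z) ≤ e^{z−1} holds whenever z < λ·e^{1−λ}. (In particular (1−z)/e^{1−z} > e^{λ−1} − λ for z ∈ [0, λe^{1−λ}).) -/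
theorem stmt_4 (l z : ℝ) (hl : l ∈ Set.Icc (0 : ℝ) 1) (hz : z ∈ Set.Icc (0 : ℝ) 1)
    (hlt : z < l * Real.exp (1 - l)) :
    (Real.exp (l - 1) - l) / (1 - z) ≤ Real.exp (z - 1) := by
  obtain ⟨hl0, hl1⟩ := hl
  obtain ⟨hz0, hz1⟩ := hz
  set E := Real.exp (1 - l) with hE
  set A := Real.exp (l - 1) with hA
  have hApos : 0 < A := Real.exp_pos _
  have hEpos : 0 < E := Real.exp_pos _
  have hAE : A * E = 1 := by
    rw [hA, hE, ← Real.exp_add]; norm_num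
  have hle : l ≤ A := by
    have := Real.add_one_le_exp (l - 1); rw [← hA] at this; linarith
  have hu1 : l * E ≤ 1 := by nlinarith
  have hz1' : z < 1 := lt_of_lt_of_le hlt hu1
  have h1z : 0 < 1 - z := by linarith
  have hE1 : 1 ≤ E := Real.one_le_exp (by linarith)
  have key : z * (z - l) ≤ l * (E - 1) := by
    rcases le_or_gt z l with h | h
    · nlinarith
    · nlinarith [mul_pos (sub_pos.mpr h) (sub_pos.mpr (lt_of_lt_of_le hlt hu1))]
  have hexp : Real.exp (z - 1) = A * Real.exp (z - l) := by
    rw [hA, ← Real.exp_add]; ring_nf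
  have h2 : 1 + (z - l) ≤ Real.exp (z - l) := by have := Real.add_one_le_exp (z - l); linarith
  have h3 : (1 + (z - l)) * (1 - z) ≤ Real.exp (z - l) * (1 - z) :=
    mul_le_mul_of_nonneg_right h2 (le_of_lt h1z)
  rw [div_le_iff₀ h1z, hexp]
  nlinarith [mul_le_mul_of_nonneg_left key (le_of_lt hApos),
    mul_le_mul_of_nonneg_left h3 (le_of_lt hApos)]
end

section
/- For every λ ∈ (0,1) and z ∈ [λ·e^{1−λ}, 1), one has −λ·e^{1−z}·e^{−λe^{1−z}} > −1/e; consequently −λe^{1−λ−z} ≥ −1/e, so W(−λe^{1−λ−z}) is well-defined, and moreover −λe^{1−z} > W(−λe^{1−λ−z}) ≥ −λe^{1−λ} ≥ −1. -/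
lemma gmono : StrictMonoOn (fun t : ℝ => t * Real.exp t) (Set.Ici (-1 : ℝ)) := by
  apply strictMonoOn_of_deriv_pos (convex_Ici _)
  · exact (continuous_id.mul Real.continuous_exp).continuousOn
  · intro x hx
    rw [interior_Ici] at hx
    have h := ((hasDerivAt_id x).mul (Real.hasDerivAt_exp x)).deriv
    have h2 : deriv (fun t : ℝ => t * Real.exp t) x = 1 * Real.exp x + x * Real.exp x := by
      simpa using h
    rw [h2]
    have hp := Real.exp_pos x
    have hx' : (-1 : ℝ) < x := hx
    nlinarith

theorem stmt_5 (W : ℝ → ℝ)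
    (hW : ∀ z : ℝ, -(Real.exp 1)⁻¹ ≤ z → -1 ≤ W z ∧ W z * Real.exp (W z) = z)
    (hW' : ∀ y : ℝ, -1 ≤ y → W (y * Real.exp y) = y)
    (l z : ℝ) (hl : l ∈ Set.Ioo (0 : ℝ) 1)
    (hz : z ∈ Set.Ico (l * Real.exp (1 - l)) 1) :
    -l * Real.exp (1 - z) * Real.exp (-(l * Real.exp (1 - z))) > -(Real.exp 1)⁻¹ ∧
    -(l * Real.exp (1 - l - z)) ≥ -(Real.exp 1)⁻¹ ∧
    -(l * Real.exp (1 - z)) > W (-(l * Real.exp (1 - l - z))) ∧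
    W (-(l * Real.exp (1 - l - z))) ≥ -(l * Real.exp (1 - l)) ∧
    -(l * Real.exp (1 - l)) ≥ -1 := by
  obtain ⟨hl0, hl1⟩ := hl
  obtain ⟨hz1, hz2⟩ := hz
  have he : (Real.exp 1)⁻¹ = Real.exp (-1) := (Real.exp_neg 1).symm
  have hexp1z : 1 < Real.exp (1 - z) := by
    have h := Real.add_one_lt_exp (show (1:ℝ) - z ≠ 0 by intro h; nlinarith [sub_eq_zero.mp h])
    linarith
  have hexp1l : 1 < Real.exp (1 - l) := by
    have h := Real.add_one_lt_exp (show (1:ℝ) - l ≠ 0 by intro h; nlinarith [sub_eq_zero.mp h])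
    linarith
  have hlz : l < z := by nlinarith
  have hzexp : z ≤ Real.exp (z - 1) := by nlinarith [Real.add_one_le_exp (z - 1)]
  -- u := l * exp (1-z)
  set u := l * Real.exp (1 - z) with hu
  have hu0 : 0 < u := mul_pos hl0 (Real.exp_pos _)
  have hu1 : u < 1 := by
    have h1 : u < Real.exp (z - 1) * Real.exp (1 - z) :=
      mul_lt_mul_of_pos_right (lt_of_lt_of_le hlz hzexp) (Real.exp_pos _)
    rwa [← Real.exp_add, show z - 1 + (1 - z) = 0 by ring, Real.exp_zero] at h1
  -- claim 1
  have c1 : u * Real.exp (-u) < Real.exp (-1) := by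
    have h1 : u < Real.exp (u - 1) := by
      have := Real.add_one_lt_exp (sub_ne_zero.mpr (ne_of_lt hu1))
      linarith
    calc u * Real.exp (-u) < Real.exp (u - 1) * Real.exp (-u) :=
          mul_lt_mul_of_pos_right h1 (Real.exp_pos _)
      _ = Real.exp (-1) := by rw [← Real.exp_add, show u - 1 + -u = -1 by ring]
  -- claim 2
  have c2 : l * Real.exp (1 - l - z) ≤ Real.exp (-1) := by
    calc l * Real.exp (1 - l - z) = l * Real.exp (1 - l) * Real.exp (-z) := by
          rw [mul_assoc, ← Real.exp_add, show 1 - l + -z = 1 - l - z by ring]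
      _ ≤ Real.exp (z - 1) * Real.exp (-z) :=
          mul_le_mul_of_nonneg_right (hz1.trans hzexp) (Real.exp_pos _).le
      _ = Real.exp (-1) := by rw [← Real.exp_add, show z - 1 + -z = -1 by ring]
  set x := -(l * Real.exp (1 - l - z)) with hx
  have hxge : -(Real.exp 1)⁻¹ ≤ x := by rw [he, hx]; linarith
  obtain ⟨hWge, hWeq⟩ := hW x hxge
  -- claim 5
  have hlexp : l ≤ Real.exp (l - 1) := by nlinarith [Real.add_one_le_exp (l - 1)]
  have c5 : l * Real.exp (1 - l) ≤ 1 := by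
    have h1 : l * Real.exp (1 - l) ≤ Real.exp (l - 1) * Real.exp (1 - l) :=
      mul_le_mul_of_nonneg_right hlexp (Real.exp_pos _).le
    rwa [← Real.exp_add, show l - 1 + (1 - l) = 0 by ring, Real.exp_zero] at h1
  set y := -(l * Real.exp (1 - l)) with hy
  have hyge : -1 ≤ y := by rw [hy]; linarith
  have hy0 : y < 0 := by
    rw [hy]; simp only [neg_neg, neg_lt, neg_zero]
    exact mul_pos hl0 (Real.exp_pos _)
  -- claim 4
  have hx' : x = y * Real.exp (-z) := by
    rw [hx, hy]
    have : Real.exp (1 - l - z) = Real.exp (1 - l) * Real.exp (-z) := by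
      rw [← Real.exp_add, show 1 - l + -z = 1 - l - z by ring]
    rw [this]; ring
  have h4 : y * Real.exp y ≤ x := by
    have hey : Real.exp (-z) ≤ Real.exp y := Real.exp_le_exp.mpr (by rw [hy]; linarith)
    rw [hx']
    exact mul_le_mul_of_nonpos_left hey hy0.le
  have c4 : y ≤ W x := by
    by_contra h
    push_neg at h
    have := gmono (Set.mem_Ici.mpr hWge) (Set.mem_Ici.mpr hyge) h
    simp only at this
    rw [hWeq] at this
    linarith
  -- claim 3
  set v := -u with hv
  have hvge : -1 ≤ v := by rw [hv]; linarith
  have h3 : x < v * Real.exp v := by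
    have hxu : x = -(u * Real.exp (-l)) := by
      rw [hx, hu]
      have : Real.exp (1 - l - z) = Real.exp (1 - z) * Real.exp (-l) := by
        rw [← Real.exp_add, show 1 - z + -l = 1 - l - z by ring]
      rw [this]; ring
    have hul : l < u := by rw [hu]; nlinarith
    have hee : Real.exp (-u) < Real.exp (-l) := Real.exp_lt_exp.mpr (by linarith)
    rw [hxu, hv]
    nlinarith
  have c3 : W x < v := by
    by_contra h
    push_neg at h
    have := gmono.monotoneOn (Set.mem_Ici.mpr hvge) (Set.mem_Ici.mpr hWge) h
    rw [hWeq] at this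
    linarith
  refine ⟨?_, ?_, ?_, ?_, ?_⟩
  · rw [he]
    have heq : -l * Real.exp (1 - z) * Real.exp (-u)
        = -(u * Real.exp (-u)) := by rw [hu]; ring
    rw [heq]; linarith
  · rw [ge_iff_le, he]; linarith
  · show v > W x
    exact c3
  · exact c4
  · linarith
end

section
/- For every λ ∈ (0,1) and z ∈ [λ·e^{1−λ}, 1), the value f₁(z) := −λ / W(−λ·e^{1−λ−z}) satisfies f₁(z) ≤ e^{z−1}. -/
theorem stmt_6 (W : ℝ → ℝ)
    (hW : ∀ z : ℝ, -(Real.exp 1)⁻¹ ≤ z → -1 ≤ W z ∧ W z * Real.exp (W z) = z)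
    (hW' : ∀ y : ℝ, -1 ≤ y → W (y * Real.exp y) = y)
    (l z : ℝ) (hl : l ∈ Set.Ioo (0 : ℝ) 1)
    (hz : z ∈ Set.Ico (l * Real.exp (1 - l)) 1) :
    -l / W (-(l * Real.exp (1 - l - z))) ≤ Real.exp (z - 1) := by
  obtain ⟨hl0, hl1⟩ := hl
  obtain ⟨hz1, hz2⟩ := hz
  -- strict monotonicity of y ↦ y * exp y on [-1, ∞)
  have mono : StrictMonoOn (fun y : ℝ => y * Real.exp y) (Set.Ici (-1 : ℝ)) := by
    apply strictMonoOn_of_deriv_pos (convex_Ici _)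
    · exact (continuous_id.mul Real.continuous_exp).continuousOn
    · intro y hy
      rw [interior_Ici] at hy
      have : HasDerivAt (fun y : ℝ => y * Real.exp y) (1 * Real.exp y + y * Real.exp y) y :=
        (hasDerivAt_id y).mul (Real.hasDerivAt_exp y)
      rw [this.deriv]
      have := Real.exp_pos y
      have : (-1 : ℝ) < y := hy
      nlinarith [Real.exp_pos y]
  have hexpz : z ≤ Real.exp (z - 1) := by
    have := Real.add_one_le_exp (z - 1)
    linarith
  -- z ≥ 1 + log l
  have hll : l ≤ l * Real.exp (1 - l) := by
    nlinarith [Real.add_one_le_exp (1 - l), Real.exp_pos (1 - l)]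
  have hzl : 1 + Real.log l ≤ z := by
    have := Real.log_le_sub_one_of_pos hl0
    linarith
  set t : ℝ := -(l * Real.exp (1 - z)) with ht_def
  have ht1 : (-1 : ℝ) ≤ t := by
    have h1 : Real.exp (1 - z) ≤ Real.exp (-Real.log l) := by
      apply Real.exp_le_exp.mpr; linarith
    rw [Real.exp_neg, Real.exp_log hl0] at h1
    have : l * Real.exp (1 - z) ≤ l * l⁻¹ := by
      exact mul_le_mul_of_nonneg_left h1 hl0.le
    rw [mul_inv_cancel₀ hl0.ne'] at this
    simp only [ht_def]; linarith
  set x : ℝ := -(l * Real.exp (1 - l - z)) with hx_def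
  have hxe : -(Real.exp 1)⁻¹ ≤ x := by
    have h1 : l * Real.exp (1 - l - z) ≤ Real.exp (-1) := by
      have : l * Real.exp (1 - l - z) = (l * Real.exp (1 - l)) * Real.exp (-z) := by
        rw [mul_assoc, ← Real.exp_add]; ring_nf
      rw [this]
      calc (l * Real.exp (1 - l)) * Real.exp (-z)
          ≤ Real.exp (z - 1) * Real.exp (-z) := by
            apply mul_le_mul_of_nonneg_right _ (Real.exp_pos _).le
            linarith
        _ = Real.exp (-1) := by rw [← Real.exp_add]; ring_nf
    rw [Real.exp_neg] at h1
    simp only [hx_def]; linarith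
  obtain ⟨hw1, hw2⟩ := hW x hxe
  set w : ℝ := W x with hw_def
  have hxneg : x < 0 := by
    have := Real.exp_pos (1 - l - z)
    simp only [hx_def]; nlinarith
  have hwneg : w < 0 := by
    by_contra h
    push_neg at h
    have := Real.exp_pos w
    nlinarith
  have hxle : x ≤ t * Real.exp t := by
    have key : l * Real.exp (1 - z + t) ≤ l * Real.exp (1 - l - z) := by
      apply mul_le_mul_of_nonneg_left _ hl0.le
      apply Real.exp_le_exp.mpr
      have h1 : (1 : ℝ) ≤ Real.exp (1 - z) := Real.one_le_exp (by linarith)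
      have : l ≤ l * Real.exp (1 - z) := by nlinarith
      simp only [ht_def]; linarith
    have : t * Real.exp t = -(l * Real.exp (1 - z + t)) := by
      simp only [ht_def]
      rw [Real.exp_add]; ring
    rw [this]
    simp only [hx_def]; linarith
  have hwt : w ≤ t := by
    have := (mono.le_iff_le (Set.mem_Ici.mpr hw1) (Set.mem_Ici.mpr ht1))
    rw [← this]
    rw [hw2]; exact hxle
  rw [div_le_iff_of_neg hwneg]
  have h1 : Real.exp (z - 1) * w ≤ Real.exp (z - 1) * t :=
    mul_le_mul_of_nonneg_left hwt (Real.exp_pos _).le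
  have h2 : Real.exp (z - 1) * t = -l := by
    simp only [ht_def]
    have : Real.exp (z - 1) * Real.exp (1 - z) = 1 := by
      rw [← Real.exp_add]; simp
    nlinarith
  linarith
end

section
/- Fix λ ∈ (0,1) and define f₁ : [0,1] → ℝ by f₁(z) = (e^{λ−1}−λ)/(1−z) for z ∈ [0, λe^{1−λ}), f₁(z) = −λ/W(−λe^{1−λ−z}) for z ∈ [λe^{1−λ}, 1), and f₁(1) = 1. Then f₁ is monotone increasing on [0,1]. -/
theorem stmt_7 (W : ℝ → ℝ)
    (hW : ∀ z : ℝ, -(Real.exp 1)⁻¹ ≤ z → -1 ≤ W z ∧ W z * Real.exp (W z) = z)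
    (hW' : ∀ y : ℝ, -1 ≤ y → W (y * Real.exp y) = y)
    (l : ℝ) (hl : l ∈ Set.Ioo (0 : ℝ) 1)
    (f₁ : ℝ → ℝ)
    (hf₁ : ∀ z, f₁ z =
      if z < l * Real.exp (1 - l) then (Real.exp (l - 1) - l) / (1 - z)
      else if z < 1 then -l / W (-(l * Real.exp (1 - l - z)))
      else 1) :
    MonotoneOn f₁ (Set.Icc (0 : ℝ) 1) := by
  obtain ⟨hl0, hl1⟩ := hl
  set E := Real.exp (l - 1) with hE
  set c := l * Real.exp (1 - l) with hc
  have hE0 : 0 < E := Real.exp_pos _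
  have hc0 : 0 < c := mul_pos hl0 (Real.exp_pos _)
  have hEc : E * c = l := by
    rw [hE, hc, ← mul_assoc, mul_comm (Real.exp (l - 1)) l, mul_assoc,
      ← Real.exp_add, show l - 1 + (1 - l) = 0 by ring, Real.exp_zero, mul_one]
  have hlE : l < E := by
    have := Real.add_one_lt_exp (x := l - 1) (by intro h; apply absurd h; intro h'; nlinarith)
    simpa [hE] using by linarith
  have hc1 : c < 1 := by nlinarith
  have hE1 : E < 1 := by rw [hE, Real.exp_lt_one_iff]; linarith
  -- strict monotonicity of y ↦ y * exp y on [-1, ∞)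
  have gmono : StrictMonoOn (fun y : ℝ => y * Real.exp y) (Set.Ici (-1 : ℝ)) := by
    apply strictMonoOn_of_deriv_pos (convex_Ici _)
    · exact (continuous_id.mul Real.continuous_exp).continuousOn
    · intro x hx
      rw [interior_Ici] at hx
      have hd : HasDerivAt (fun y : ℝ => y * Real.exp y)
          (1 * Real.exp x + x * Real.exp x) x :=
        (hasDerivAt_id x).mul (Real.hasDerivAt_exp x)
      rw [hd.deriv]
      have := Real.exp_pos x
      have hx' : -1 < x := hx
      nlinarith
  have hrefl : ∀ u v : ℝ, -1 ≤ u → -1 ≤ v →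
      u * Real.exp u ≤ v * Real.exp v → u ≤ v := by
    intro u v hu hv h
    by_contra hlt
    push_neg at hlt
    have := gmono hv hu hlt
    simp only at this
    linarith
  have ht : ∀ z : ℝ, -(l * Real.exp (1 - l - z)) = -c * Real.exp (-z) := by
    intro z
    rw [hc, show 1 - l - z = (1 - l) + -z by ring, Real.exp_add]
    ring
  have hdom : ∀ z : ℝ, c ≤ z → -(Real.exp 1)⁻¹ ≤ -c * Real.exp (-z) := by
    intro z hz
    have h1 : c ≤ Real.exp (z - 1) := by
      have h2 : c ≤ Real.exp (c - 1) := by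
        have := Real.add_one_le_exp (c - 1); linarith
      exact h2.trans (Real.exp_le_exp.mpr (by linarith))
    have h3 : c * Real.exp (-z) ≤ Real.exp (z - 1) * Real.exp (-z) :=
      mul_le_mul_of_nonneg_right h1 (Real.exp_pos _).le
    rw [← Real.exp_add, show z - 1 + -z = -1 by ring] at h3
    have h4 : (Real.exp 1)⁻¹ = Real.exp (-1) := by rw [Real.exp_neg]
    nlinarith
  have hWf : ∀ z : ℝ, c ≤ z → -1 ≤ W (-c * Real.exp (-z)) ∧
      W (-c * Real.exp (-z)) * Real.exp (W (-c * Real.exp (-z))) = -c * Real.exp (-z) :=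
    fun z hz => hW _ (hdom z hz)
  -- lower bound: W t ≥ -c
  have hWlb : ∀ z : ℝ, c ≤ z → -c ≤ W (-c * Real.exp (-z)) := by
    intro z hz
    obtain ⟨h1, h2⟩ := hWf z hz
    apply hrefl _ _ (by linarith) h1
    rw [h2]
    have := Real.exp_le_exp.mpr (neg_le_neg hz)
    nlinarith
  -- upper bound: W t ≤ -l for z ≤ 1
  have hWub : ∀ z : ℝ, c ≤ z → z ≤ 1 → W (-c * Real.exp (-z)) ≤ -l := by
    intro z hz hz1
    obtain ⟨h1, h2⟩ := hWf z hz
    apply hrefl _ _ h1 (by linarith)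
    rw [h2]
    have h3 : c * Real.exp (-z) = l * Real.exp (-l) * Real.exp (1 - z) := by
      rw [hc, mul_assoc, mul_assoc, ← Real.exp_add, ← Real.exp_add,
        show 1 - l + -z = -l + (1 - z) by ring]
    have h4 : (1 : ℝ) ≤ Real.exp (1 - z) := Real.one_le_exp (by linarith)
    have h5 : l * Real.exp (-l) ≤ l * Real.exp (-l) * Real.exp (1 - z) :=
      le_mul_of_one_le_right (by positivity) h4
    nlinarith
  -- monotonicity of W on these arguments
  have hWmono : ∀ z₁ z₂ : ℝ, c ≤ z₁ → z₁ ≤ z₂ →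
      W (-c * Real.exp (-z₁)) ≤ W (-c * Real.exp (-z₂)) := by
    intro z₁ z₂ h1 h12
    obtain ⟨ha1, ha2⟩ := hWf z₁ h1
    obtain ⟨hb1, hb2⟩ := hWf z₂ (h1.trans h12)
    apply hrefl _ _ ha1 hb1
    rw [ha2, hb2]
    have := Real.exp_le_exp.mpr (neg_le_neg h12)
    nlinarith
  -- B-branch facts
  have hB_lb : ∀ z : ℝ, c ≤ z → z ≤ 1 → E ≤ -l / W (-c * Real.exp (-z)) := by
    intro z hz hz1
    have h1 := hWlb z hz
    have h2 := hWub z hz hz1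
    rw [neg_div, ← div_neg, le_div_iff₀ (by linarith : (0:ℝ) < -W (-c * Real.exp (-z)))]
    nlinarith
  have hB_ub : ∀ z : ℝ, c ≤ z → z ≤ 1 → -l / W (-c * Real.exp (-z)) ≤ 1 := by
    intro z hz hz1
    have h2 := hWub z hz hz1
    rw [neg_div, ← div_neg, div_le_one (by linarith : (0:ℝ) < -W (-c * Real.exp (-z)))]
    linarith
  have hB_mono : ∀ z₁ z₂ : ℝ, c ≤ z₁ → z₁ ≤ z₂ → z₂ ≤ 1 →
      -l / W (-c * Real.exp (-z₁)) ≤ -l / W (-c * Real.exp (-z₂)) := by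
    intro z₁ z₂ h1 h12 h21
    have hm := hWmono z₁ z₂ h1 h12
    have h2 := hWub z₂ (h1.trans h12) h21
    rw [neg_div, ← div_neg, neg_div, ← div_neg]
    gcongr <;> linarith
  -- A-branch upper bound
  have hA_ub : ∀ z : ℝ, 0 ≤ z → z ≤ c → (E - l) / (1 - z) ≤ E := by
    intro z h0 hzc
    rw [div_le_iff₀ (by linarith : (0:ℝ) < 1 - z)]
    nlinarith
  -- main proof
  intro a ha b hb hab
  obtain ⟨ha0, ha1⟩ := ha
  obtain ⟨hb0, hb1⟩ := hb
  rw [hf₁ a, hf₁ b]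
  by_cases h1 : a < c
  · rw [if_pos h1]
    by_cases h2 : b < c
    · rw [if_pos h2]
      gcongr <;> linarith
    · rw [if_neg h2]
      by_cases h3 : b < 1
      · rw [if_pos h3, ht b]
        exact (hA_ub a ha0 h1.le).trans (hB_lb b (not_lt.mp h2) h3.le)
      · rw [if_neg h3]
        exact (hA_ub a ha0 h1.le).trans hE1.le
  · rw [if_neg h1]
    have hca : c ≤ a := not_lt.mp h1
    have h2 : ¬ b < c := by intro h; linarith
    rw [if_neg h2]
    by_cases h3 : b < 1
    · have h4 : a < 1 := lt_of_le_of_lt hab h3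
      rw [if_pos h4, if_pos h3, ht a, ht b]
      exact hB_mono a b hca hab h3.le
    · rw [if_neg h3]
      by_cases h4 : a < 1
      · rw [if_pos h4, ht a]
        exact hB_ub a hca ha1
      · rw [if_neg h4]
end

section
/- For every λ ∈ (0,1), ∫_{λe^{1−λ}}^{1} (−λ / W(−λe^{1−λ−z})) dz = 1 − e^{λ−1} − λ(1−λ). -/
/-!
For `w < 0` put `φ w = k - log w - w`, so that `w * exp w = -exp (k - φ w)`. On `[-1, 0)` the
map `φ` is increasing and `W (-exp (k - φ w)) = w`, so substituting `z = φ w` (with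
`dz = -(1 + w) / w dw`) turns the integral into `∫ λ (w⁻² + w⁻¹) dw` over `[-λ e^{1-λ}, -λ]`,
whose primitive is `λ (log w - w⁻¹)`. With `k = log λ + 1 - λ` the endpoints are
`φ (-λ e^{1-λ}) = λ e^{1-λ}` and `φ (-λ) = 1`.
-/

open Real Set MeasureTheory intervalIntegral

theorem integral_Icc_comp_lambertW {W : ℝ → ℝ} (hW : ∀ y, -1 ≤ y → W (y * exp y) = y)
    (k : ℝ) {a b : ℝ} (ha : -1 ≤ a) (hab : a ≤ b) (hb : b < 0) (g : ℝ → ℝ) :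
    ∫ z in Icc (k - log a - a) (k - log b - b), g (W (-exp (k - z))) =
      ∫ w in Icc a b, (-w⁻¹ - 1) * g w := by
  have hderiv : ∀ w ∈ Ioo a b, HasDerivAt (fun w => k - log w - w) (-w⁻¹ - 1) w :=
    fun w hw => (((hasDerivAt_const w k).sub (hasDerivAt_log (by linarith [hw.2]))).sub
      (hasDerivAt_id w)).congr_deriv (by ring)
  have hcont : ContinuousOn (fun w => k - log w - w) (Icc a b) :=
    (continuousOn_const.sub (continuousOn_log.mono fun w hw => show w ≠ 0 by linarith [hw.2])).sub
      continuousOn_id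
  have hnonneg : ∀ w ∈ Ioo a b, 0 ≤ -w⁻¹ - 1 := fun w hw => by
    have hw0 : w < 0 := by linarith [hw.2]
    rw [show -w⁻¹ - 1 = (1 + w) * -w⁻¹ by field_simp [hw0.ne]; ring]
    exact mul_nonneg (by linarith [hw.1]) (neg_nonneg.2 (inv_nonpos.2 hw0.le))
  rw [← integral_Icc_deriv_smul_of_deriv_nonneg hcont hderiv hnonneg hab]
  refine setIntegral_congr_fun measurableSet_Icc fun w hw => ?_
  have hw0 : w < 0 := by linarith [hw.2]
  have hinv : -exp (k - (k - log w - w)) = w * exp w := by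
    rw [show k - (k - log w - w) = log w + w by ring, exp_add, exp_log_of_neg hw0]
    ring
  simp only [smul_eq_mul, hinv, hW w (by linarith [hw.1])]

theorem integral_inv_sq_add_inv {a b : ℝ} (h : (0 : ℝ) ∉ uIcc a b) :
    ∫ w in a..b, (w⁻¹ ^ 2 + w⁻¹) = (log b - b⁻¹) - (log a - a⁻¹) := by
  have hne : ∀ w ∈ uIcc a b, w ≠ 0 := fun w hw hw0 => h (hw0 ▸ hw)
  refine integral_eq_sub_of_hasDerivAt (f := fun w => log w - w⁻¹) (fun w hw => ?_) ?_
  · exact ((hasDerivAt_log (hne w hw)).sub (hasDerivAt_inv (hne w hw))).congr_deriv (by ring)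
  · exact (ContinuousOn.add ((continuousOn_inv₀.mono fun w hw => hne w hw).pow 2)
      (continuousOn_inv₀.mono fun w hw => hne w hw)).intervalIntegrable

theorem stmt_10_general (W : ℝ → ℝ)
    (hW' : ∀ y : ℝ, -1 ≤ y → W (y * Real.exp y) = y)
    (l : ℝ) (hl : l ∈ Set.Ioo (0 : ℝ) 1) :
    ∫ z in (l * Real.exp (1 - l))..(1 : ℝ), (-l / W (-(l * Real.exp (1 - l - z)))) =
      1 - Real.exp (l - 1) - l * (1 - l) := by
  obtain ⟨hl0, hl1⟩ := hl
  set k := log l + (1 - l)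
  set u := l * exp (1 - l)
  have hlogu : log u = k := by rw [log_mul hl0.ne' (exp_pos _).ne', log_exp]
  have hk : k < 0 := by linarith [log_lt_sub_one_of_pos hl0 hl1.ne]
  have hu1 : u ≤ 1 := by
    rw [← exp_log (by positivity : 0 < u), hlogu]
    exact exp_le_one_iff.2 hk.le
  have hlu : l ≤ u := le_mul_of_one_le_right hl0.le (one_le_exp (by linarith))
  have hφu : k - log (-u) - -u = u := by rw [log_neg_eq_log, hlogu]; ring
  have hφl : k - log (-l) - -l = 1 := by rw [log_neg_eq_log]; ring
  have harg : ∀ z, l * exp (1 - l - z) = exp (k - z) := fun z => by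
    rw [show k - z = log l + (1 - l - z) by ring, exp_add, exp_log hl0]
  have hlu_inv : l * u⁻¹ = exp (l - 1) := by
    rw [mul_inv, ← mul_assoc, mul_inv_cancel₀ hl0.ne', one_mul, ← exp_neg, neg_sub]
  calc ∫ z in u..1, -l / W (-(l * exp (1 - l - z)))
      = ∫ z in Icc (k - log (-u) - -u) (k - log (-l) - -l), -l / W (-exp (k - z)) := by
        rw [hφu, hφl, integral_of_le hu1, ← integral_Icc_eq_integral_Ioc]
        simp only [harg]
    _ = ∫ w in Icc (-u) (-l), (-w⁻¹ - 1) * (-l / w) :=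
        integral_Icc_comp_lambertW hW' k (by linarith) (by linarith) (by linarith) _
    _ = l * ∫ w in (-u)..(-l), (w⁻¹ ^ 2 + w⁻¹) := by
        rw [← intervalIntegral.integral_const_mul, integral_of_le (by linarith),
          ← integral_Icc_eq_integral_Ioc]
        congr 1 with w
        ring
    _ = 1 - exp (l - 1) - l * (1 - l) := by
        have h0 : (0 : ℝ) ∉ uIcc (-u) (-l) := by
          rw [uIcc_of_le (by linarith)]
          exact fun h => by linarith [h.2]
        rw [integral_inv_sq_add_inv h0, log_neg_eq_log, log_neg_eq_log, hlogu, inv_neg, inv_neg,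
          ← hlu_inv]
        field_simp
        ring

theorem stmt_10 (W : ℝ → ℝ)
    (hW : ∀ z : ℝ, -(Real.exp 1)⁻¹ ≤ z → -1 ≤ W z ∧ W z * Real.exp (W z) = z)
    (hW' : ∀ y : ℝ, -1 ≤ y → W (y * Real.exp y) = y)
    (l : ℝ) (hl : l ∈ Set.Ioo (0 : ℝ) 1) :
    ∫ z in (l * Real.exp (1 - l))..(1 : ℝ), (-l / W (-(l * Real.exp (1 - l - z)))) =
      1 - Real.exp (l - 1) - l * (1 - l) :=
  stmt_10_general W hW' l hl
end

section
/- For every λ ∈ [0,1], the robustness value r(λ) := 1 − e^{λ−1} − (e^{λ−1}−λ)·ln(1 − λe^{1−λ}) − λ(1−λ) satisfies r(λ) ≤ 1 − e^{λ−1}, with the convention r(1) = 0. -/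
/-!
Put `r = 1 - λ e^{1-λ}`, the argument of the logarithm. Then `e^{λ-1} - λ = e^{λ-1} r`
and `e^{λ-1} (1 - r) = λ`, so the claim reads `e^{λ-1} (-r log r) ≤ λ (1 - λ)`.
The logarithmic-mean inequality `-r log r ≤ (1 - r) √r` reduces this to `√r ≤ 1 - λ`,
which is `λ e^{1-λ} ≥ λ (2 - λ)`, i.e. `e^{1-λ} ≥ 2 - λ`.
-/

open Real

lemma sub_inv_div_two_le_log {x : ℝ} (hx0 : 0 < x) (hx1 : x ≤ 1) : (x - x⁻¹) / 2 ≤ log x := by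
  rw [← sinh_log hx0]
  exact sinh_le_self_iff.mpr (log_nonpos hx0.le hx1)

lemma neg_mul_log_le_one_sub_mul_sqrt {x : ℝ} (hx0 : 0 ≤ x) (hx1 : x ≤ 1) :
    -(x * log x) ≤ (1 - x) * √x := by
  rcases hx0.eq_or_lt with rfl | hx0
  · simp
  set ρ := √x
  have hρ0 : 0 < ρ := sqrt_pos.mpr hx0
  have hρ1 : ρ ≤ 1 := sqrt_le_one.mpr hx1
  have hx : x = ρ ^ 2 := (sq_sqrt hx0.le).symm
  have hlog : log x = 2 * log ρ := by rw [hx, log_pow, Nat.cast_ofNat]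
  have hmean := sub_inv_div_two_le_log hρ0 hρ1
  calc -(x * log x) = ρ ^ 2 * (-2 * log ρ) := by rw [hlog, hx]; ring
    _ ≤ ρ ^ 2 * (ρ⁻¹ - ρ) := by gcongr; linarith
    _ = (1 - x) * ρ := by rw [hx]; field_simp

lemma mul_exp_one_sub_le_one (l : ℝ) : l * exp (1 - l) ≤ 1 := by
  calc l * exp (1 - l) ≤ exp (l - 1) * exp (1 - l) := by
        gcongr; linarith [add_one_le_exp (l - 1)]
    _ = 1 := by rw [← exp_add]; simp

lemma one_sub_mul_exp_one_sub_le_sq {l : ℝ} (hl : 0 ≤ l) : 1 - l * exp (1 - l) ≤ (1 - l) ^ 2 := by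
  have : l * (2 - l) ≤ l * exp (1 - l) := by
    gcongr; linarith [add_one_le_exp (1 - l)]
  linarith

theorem stmt_12 (l : ℝ) (hl : l ∈ Set.Icc (0 : ℝ) 1) :
    1 - Real.exp (l - 1) - (Real.exp (l - 1) - l) * Real.log (1 - l * Real.exp (1 - l))
      - l * (1 - l) ≤ 1 - Real.exp (l - 1) := by
  obtain ⟨hl0, hl1⟩ := hl
  set r := 1 - l * exp (1 - l) with hr
  have hr0 : 0 ≤ r := sub_nonneg.mpr (mul_exp_one_sub_le_one l)
  have hr1 : r ≤ 1 := sub_le_self 1 (mul_nonneg hl0 (exp_pos _).le)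
  have hsqrt : √r ≤ 1 - l :=
    (sqrt_le_left (by linarith)).mpr (one_sub_mul_exp_one_sub_le_sq hl0)
  have hinv : exp (l - 1) * exp (1 - l) = 1 := by rw [← exp_add]; simp
  have hfactor : exp (l - 1) - l = exp (l - 1) * r := by rw [hr]; linear_combination l * hinv
  have hcomplement : exp (l - 1) * (1 - r) = l := by rw [hr]; linear_combination l * hinv
  suffices -((exp (l - 1) - l) * log r) ≤ l * (1 - l) by linarith
  calc -((exp (l - 1) - l) * log r) = exp (l - 1) * -(r * log r) := by rw [hfactor]; ring
    _ ≤ exp (l - 1) * ((1 - r) * (1 - l)) := by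
        gcongr
        exact (neg_mul_log_le_one_sub_mul_sqrt hr0 hr1).trans (by gcongr)
    _ = l * (1 - l) := by rw [← mul_assoc, hcomplement]
end

section
/- For every λ ∈ [0,1] and X ∈ [0,1], define f₀(z) = min{e^{z+λ−1}, 1}. Then ∫₀^X f₀(z) dz + (1 − f₀(X)) ≥ 1 − e^{λ−1}. -/
open Real intervalIntegral

theorem stmt_13 (l X : ℝ) (hl : l ∈ Set.Icc (0 : ℝ) 1) (hX : X ∈ Set.Icc (0 : ℝ) 1) :
    (∫ z in (0 : ℝ)..X, min (Real.exp (z + l - 1)) 1) + (1 - min (Real.exp (X + l - 1)) 1)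
      ≥ 1 - Real.exp (l - 1) := by
  obtain ⟨hl0, hl1⟩ := hl
  obtain ⟨hX0, hX1⟩ := hX
  have hcont : Continuous fun z : ℝ => min (Real.exp (z + l - 1)) 1 :=
    Continuous.min (Real.continuous_exp.comp (by continuity)) continuous_const
  have hexp : ∀ a b : ℝ, (∫ z in a..b, Real.exp (z + l - 1))
      = Real.exp (b + l - 1) - Real.exp (a + l - 1) := by
    intro a b
    have h : ∀ z : ℝ, z + l - 1 = z + (l - 1) := by intro z; ring
    simp only [h]
    rw [intervalIntegral.integral_comp_add_right (fun x => Real.exp x) (l-1),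
      integral_exp]
  by_cases hc : X + l - 1 ≤ 0
  · have h1 : (∫ z in (0:ℝ)..X, min (Real.exp (z + l - 1)) 1)
        = ∫ z in (0:ℝ)..X, Real.exp (z + l - 1) := by
      apply intervalIntegral.integral_congr
      intro z hz
      rw [Set.uIcc_of_le hX0] at hz
      have hz0 : z + l - 1 ≤ 0 := by linarith [hz.2]
      simp [min_eq_left (Real.exp_le_one_iff.mpr hz0)]
    rw [h1, hexp]
    rw [min_eq_left (Real.exp_le_one_iff.mpr hc)]
    simp only [zero_add]
    linarith
  · push_neg at hc
    have hXl : 1 - l ≤ X := by linarith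
    have h1l : (0:ℝ) ≤ 1 - l := by linarith
    rw [min_eq_right (Real.one_le_exp (by linarith : (0:ℝ) ≤ X + l - 1))]
    have hsplit : (∫ z in (0:ℝ)..X, min (Real.exp (z + l - 1)) 1)
        = (∫ z in (0:ℝ)..(1-l), min (Real.exp (z + l - 1)) 1)
          + ∫ z in (1-l)..X, min (Real.exp (z + l - 1)) 1 := by
      rw [intervalIntegral.integral_add_adjacent_intervals
        (hcont.intervalIntegrable _ _) (hcont.intervalIntegrable _ _)]
    have hA : (∫ z in (0:ℝ)..(1-l), min (Real.exp (z + l - 1)) 1)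
        = 1 - Real.exp (l - 1) := by
      have h2 : (∫ z in (0:ℝ)..(1-l), min (Real.exp (z + l - 1)) 1)
          = ∫ z in (0:ℝ)..(1-l), Real.exp (z + l - 1) := by
        apply intervalIntegral.integral_congr
        intro z hz
        rw [Set.uIcc_of_le h1l] at hz
        exact min_eq_left (Real.exp_le_one_iff.mpr (by linarith [hz.2]))
      rw [h2, hexp]
      norm_num
    have hB : 0 ≤ ∫ z in (1-l)..X, min (Real.exp (z + l - 1)) 1 := by
      apply intervalIntegral.integral_nonneg hXl
      intro z _
      exact le_min (Real.exp_pos _).le zero_le_one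
    linarith [hsplit, hA, hB]
end

section
/- Fix λ ∈ (0,1) and X ∈ [λe^{1−λ}, 1). Let w := W(−λe^{1−λ−X}) and f₁(X) := −λ/w. Define Y⋆ := 1 − λ + ln f₁(X). Then Y⋆ ∈ [0, 1−λ], X − Y⋆ = −w, and (X − Y⋆)·f₁(X) = λ; consequently ∫₀^{Y⋆} e^{z+λ−1} dz + (X − Y⋆)·f₁(X) + (1 − f₁(X)) = 1 + λ − e^{λ−1}. -/
open Real Set

private lemma memono : StrictMonoOn (fun y : ℝ => y * Real.exp y) (Set.Ici (-1 : ℝ)) := by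
  apply strictMonoOn_of_deriv_pos (convex_Ici _)
  · exact (continuous_id.mul Real.continuous_exp).continuousOn
  · intro x hx
    rw [interior_Ici] at hx
    have h : HasDerivAt (fun y : ℝ => y * Real.exp y) (1 * Real.exp x + x * Real.exp x) x :=
      (hasDerivAt_id x).mul (Real.hasDerivAt_exp x)
    rw [h.deriv]
    have hx1 : (-1 : ℝ) < x := hx
    nlinarith [Real.exp_pos x]

private lemma hanti : StrictAntiOn (fun x : ℝ => x * Real.exp (1 - x) + x - Real.log x)
    (Set.Ioc (0 : ℝ) 1) := by
  apply strictAntiOn_of_deriv_neg (convex_Ioc 0 1)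
  · apply ContinuousOn.sub
    · exact ((continuous_id.mul (Real.continuous_exp.comp
        (continuous_const.sub continuous_id))).add continuous_id).continuousOn
    · exact Real.continuousOn_log.mono (fun x hx => by
        simp only [Set.mem_compl_iff, Set.mem_singleton_iff]
        exact ne_of_gt hx.1)
  · intro x hx
    rw [interior_Ioc] at hx
    obtain ⟨hx0, hx1⟩ := hx
    have he : HasDerivAt (fun y : ℝ => Real.exp (1 - y)) (Real.exp (1 - x) * (0 - 1)) x :=
      (Real.hasDerivAt_exp (1 - x)).comp x ((hasDerivAt_const x 1).sub (hasDerivAt_id x))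
    have h : HasDerivAt (fun y : ℝ => y * Real.exp (1 - y) + y - Real.log y)
        (1 * Real.exp (1 - x) + x * (Real.exp (1 - x) * (0 - 1)) + 1 - x⁻¹) x :=
      (((hasDerivAt_id x).mul he).add (hasDerivAt_id x)).sub (Real.hasDerivAt_log (ne_of_gt hx0))
    rw [h.deriv]
    -- exp (1 - x) < 1/x
    have hlog : Real.log x < x - 1 := Real.log_lt_sub_one_of_pos hx0 (ne_of_lt hx1)
    have hexplt : Real.exp (1 - x) < x⁻¹ := by
      rw [← Real.exp_log (inv_pos.mpr hx0), Real.log_inv]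
      exact Real.exp_lt_exp.mpr (by linarith)
    have h1x : (0:ℝ) < 1 - x := by linarith
    have h2 : (1 - x) * Real.exp (1 - x) < (1 - x) * x⁻¹ := by
      exact mul_lt_mul_of_pos_left hexplt h1x
    have h3 : (1 - x) * x⁻¹ = x⁻¹ - 1 := by field_simp
    nlinarith

private lemma keyineq {l : ℝ} (hl0 : 0 < l) (hl1 : l < 1) :
    Real.log l + 2 - l ≤ l * Real.exp (1 - l) := by
  have h := hanti (Set.mem_Ioc.mpr ⟨hl0, le_of_lt hl1⟩)
      (Set.mem_Ioc.mpr ⟨one_pos, le_refl 1⟩) hl1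
  simp only [Real.log_one, sub_self, Real.exp_zero, mul_one] at h
  linarith

theorem stmt_15 (W : ℝ → ℝ)
    (hW : ∀ z : ℝ, -(Real.exp 1)⁻¹ ≤ z → -1 ≤ W z ∧ W z * Real.exp (W z) = z)
    (hW' : ∀ y : ℝ, -1 ≤ y → W (y * Real.exp y) = y)
    (l X : ℝ) (hl : l ∈ Set.Ioo (0 : ℝ) 1)
    (hX : X ∈ Set.Ico (l * Real.exp (1 - l)) 1)
    (w f₁ Y : ℝ)
    (hw : w = W (-(l * Real.exp (1 - l - X))))
    (hf₁ : f₁ = -l / w)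
    (hY : Y = 1 - l + Real.log f₁) :
    Y ∈ Set.Icc (0 : ℝ) (1 - l) ∧
    X - Y = -w ∧
    (X - Y) * f₁ = l ∧
    (∫ z in (0 : ℝ)..Y, Real.exp (z + l - 1)) + (X - Y) * f₁ + (1 - f₁) =
      1 + l - Real.exp (l - 1) := by
  obtain ⟨hl0, hl1⟩ := hl
  obtain ⟨hX0, hX1⟩ := hX
  have hlog_le : Real.log l ≤ l - 1 := Real.log_le_sub_one_of_pos hl0
  have hkey : Real.log l + 2 - l ≤ l * Real.exp (1 - l) := keyineq hl0 hl1
  -- the argument of W is ≥ -1/e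
  have hz : -(Real.exp 1)⁻¹ ≤ -(l * Real.exp (1 - l - X)) := by
    have h1 : l * Real.exp (1 - l - X) ≤ (Real.exp 1)⁻¹ := by
      rw [← Real.exp_neg]
      calc l * Real.exp (1 - l - X) = Real.exp (Real.log l + (1 - l - X)) := by
            rw [Real.exp_add, Real.exp_log hl0]
        _ ≤ Real.exp (-1) := Real.exp_le_exp.mpr (by linarith)
    linarith
  obtain ⟨hw1, hwe⟩ := hW _ hz
  rw [← hw] at hw1 hwe
  -- l * exp (1 - l) ≤ 1
  have hle1 : l * Real.exp (1 - l) ≤ 1 := by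
    calc l * Real.exp (1 - l) = Real.exp (Real.log l + (1 - l)) := by
          rw [Real.exp_add, Real.exp_log hl0]
      _ ≤ Real.exp 0 := Real.exp_le_exp.mpr (by linarith)
      _ = 1 := Real.exp_zero
  have hamem : -(l * Real.exp (1 - l)) ∈ Set.Ici (-1 : ℝ) := by
    simp only [Set.mem_Ici]; linarith
  have hwmem : w ∈ Set.Ici (-1 : ℝ) := hw1
  have hlmem : -l ∈ Set.Ici (-1 : ℝ) := by simp only [Set.mem_Ici]; linarith
  -- w < -l
  have hwlt : w < -l := by
    have hgl : w * Real.exp w < (-l) * Real.exp (-l) := by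
      rw [hwe]
      have : Real.exp (-l) < Real.exp (1 - l - X) :=
        Real.exp_lt_exp.mpr (by linarith)
      nlinarith
    exact (memono.lt_iff_lt hwmem hlmem).mp hgl
  -- -(l e^{1-l}) ≤ w
  have hwge : -(l * Real.exp (1 - l)) ≤ w := by
    have hga : (-(l * Real.exp (1 - l))) * Real.exp (-(l * Real.exp (1 - l))) ≤
        w * Real.exp w := by
      rw [hwe]
      have h1 : Real.exp (1 - l - X) ≤ Real.exp (1 - l) * Real.exp (-(l * Real.exp (1 - l))) := by
        rw [← Real.exp_add]
        exact Real.exp_le_exp.mpr (by linarith)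
      nlinarith
    exact (memono.le_iff_le hamem hwmem).mp hga
  have hwneg : w < 0 := by linarith
  have hwne : w ≠ 0 := ne_of_lt hwneg
  have hnwpos : 0 < -w := by linarith
  have hf₁pos : 0 < f₁ := by
    rw [hf₁]
    exact div_pos_of_neg_of_neg (by linarith) hwneg
  -- log (-w) identity
  have hlognw : Real.log (-w) + w = Real.log l + (1 - l - X) := by
    have h1 : (-w) * Real.exp w = l * Real.exp (1 - l - X) := by linarith [hwe]
    have h2 : Real.log ((-w) * Real.exp w) = Real.log (l * Real.exp (1 - l - X)) := by rw [h1]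
    rw [Real.log_mul (ne_of_gt hnwpos) (Real.exp_ne_zero w),
        Real.log_mul (ne_of_gt hl0) (Real.exp_ne_zero _),
        Real.log_exp, Real.log_exp] at h2
    linarith
  have hlogf : Real.log f₁ = Real.log l - Real.log (-w) := by
    rw [hf₁, neg_div, ← div_neg, Real.log_div (ne_of_gt hl0) (ne_of_gt hnwpos)]
  have hYeq : Y = X + w := by
    rw [hY, hlogf]; linarith
  have hXY : X - Y = -w := by linarith
  have hXYf : (X - Y) * f₁ = l := by
    rw [hXY, hf₁]
    field_simp
  refine ⟨⟨by linarith, by linarith⟩, hXY, hXYf, ?_⟩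
  have hf₁exp : f₁ = Real.exp (Y + l - 1) := by
    rw [← Real.exp_log hf₁pos]
    congr 1
    linarith [hY]
  have hint : (∫ z in (0 : ℝ)..Y, Real.exp (z + l - 1)) =
      Real.exp (Y + l - 1) - Real.exp (l - 1) := by
    have heq : ∀ z : ℝ, Real.exp (z + l - 1) = Real.exp z * Real.exp (l - 1) := by
      intro z; rw [← Real.exp_add]; ring_nf
    simp_rw [heq]
    rw [intervalIntegral.integral_mul_const, integral_exp, Real.exp_zero]
    ring
  rw [hint, hXYf, ← hf₁exp]
  ring
end

section
/- For every λ ∈ [0,1] the function h : [0,1] → ℝ defined by h(ℓ) = ∫₀^ℓ g(z)dz + ∫_ℓ^λ (1−g(z))dz + (1−λ+ℓ)(1−g(ℓ)) for ℓ ∈ [0,λ), and h(ℓ) = ∫₀^ℓ g(z)dz + (1−g(ℓ)) for ℓ ∈ [λ,1], where g(z) = e^{λ−1}(z+1−λ) for z ∈ [0,λ) and g(z) = e^{z−1} for z ∈ [λ,1], is constant on [0,1] with value 1 − (1 − λ + λ²/2)·e^{λ−1}. -/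
/-!
On `(-∞, l]` the profile `g` is affine and on `[l, ∞)` it is `exp (z - 1)`, so every integral in
`h t` has a closed form; splitting `∫₀ᵗ g` at `l` when `t ≥ l`, the dependence on `t` cancels
in both branches.
-/

open Real intervalIntegral

noncomputable def affineExpProfile (l z : ℝ) : ℝ :=
  if z < l then exp (l - 1) * (z + 1 - l) else exp (z - 1)

theorem affineExpProfile_of_le {l z : ℝ} (hz : z ≤ l) :
    affineExpProfile l z = exp (l - 1) * (z + 1 - l) := by
  rcases hz.lt_or_eq with hz | rfl
  · simp [affineExpProfile, hz]
  · simp [affineExpProfile]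

theorem affineExpProfile_of_ge {l z : ℝ} (hz : l ≤ z) : affineExpProfile l z = exp (z - 1) := by
  simp [affineExpProfile, hz.not_gt]

theorem continuous_affineExpProfile (l : ℝ) : Continuous (affineExpProfile l) := by
  have : affineExpProfile l = fun z => if z ≤ l then exp (l - 1) * (z + 1 - l) else exp (z - 1) := by
    funext z
    split_ifs with hz
    · exact affineExpProfile_of_le hz
    · exact affineExpProfile_of_ge (not_le.mp hz).le
  rw [this]
  exact Continuous.if_le (by fun_prop) (by fun_prop) continuous_id continuous_const
    (fun z hz => by rw [hz]; ring_nf)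

theorem integral_const_mul_add_const (c d a b : ℝ) :
    ∫ z in a..b, c * (z + d) = c * ((b ^ 2 - a ^ 2) / 2 + d * (b - a)) := by
  rw [integral_const_mul, integral_add intervalIntegrable_id intervalIntegrable_const,
    integral_id, integral_const, smul_eq_mul]
  ring

theorem integral_exp_sub_one (a b : ℝ) : ∫ z in a..b, exp (z - 1) = exp (b - 1) - exp (a - 1) := by
  rw [integral_comp_sub_right (fun z => exp z), integral_exp]

theorem integral_affineExpProfile_of_le {l a b : ℝ} (ha : a ≤ l) (hb : b ≤ l) :
    ∫ z in a..b, affineExpProfile l z = exp (l - 1) * ((b ^ 2 - a ^ 2) / 2 + (1 - l) * (b - a)) := by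
  rw [← integral_const_mul_add_const]
  refine integral_congr fun z hz => ?_
  rw [affineExpProfile_of_le (hz.2.trans (sup_le ha hb))]
  ring

theorem integral_affineExpProfile_of_ge {l a b : ℝ} (ha : l ≤ a) (hb : l ≤ b) :
    ∫ z in a..b, affineExpProfile l z = exp (b - 1) - exp (a - 1) := by
  rw [← integral_exp_sub_one]
  exact integral_congr fun z hz => affineExpProfile_of_ge ((le_inf ha hb).trans hz.1)

theorem stmt_16 (l : ℝ) (hl : l ∈ Set.Icc (0 : ℝ) 1)
    (g h : ℝ → ℝ)
    (hg : ∀ z, g z = if z < l then Real.exp (l - 1) * (z + 1 - l) else Real.exp (z - 1))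
    (hh : ∀ t, h t =
      if t < l then
        (∫ z in (0 : ℝ)..t, g z) + (∫ z in t..l, (1 - g z)) + (1 - l + t) * (1 - g t)
      else (∫ z in (0 : ℝ)..t, g z) + (1 - g t)) :
    ∀ t ∈ Set.Icc (0 : ℝ) 1, h t = 1 - (1 - l + l ^ 2 / 2) * Real.exp (l - 1) := by
  obtain rfl : g = affineExpProfile l := funext hg
  have hint : ∀ a b, IntervalIntegrable (affineExpProfile l) MeasureTheory.volume a b :=
    fun a b => (continuous_affineExpProfile l).intervalIntegrable a b
  intro t _
  rw [hh]
  split_ifs with htl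
  · rw [integral_sub intervalIntegrable_const (hint t l), integral_const, smul_eq_mul,
      integral_affineExpProfile_of_le hl.1 htl.le, integral_affineExpProfile_of_le htl.le le_rfl,
      affineExpProfile_of_le htl.le]
    ring
  · have hle : l ≤ t := not_lt.mp htl
    rw [← integral_add_adjacent_intervals (hint 0 l) (hint l t),
      integral_affineExpProfile_of_le hl.1 le_rfl, integral_affineExpProfile_of_ge le_rfl hle,
      affineExpProfile_of_ge hle]
    ring
end

section
/- For every λ ∈ [0,1] and ℓ ∈ [0,1], with g(z) := e^{λ−1} for z ∈ [0,λ) and g(z) := e^{z−1} for z ∈ [λ,1], we have ∫₀^{max(ℓ,λ)} g(z) dz + (1 − g(ℓ)) ≥ 1 − (1−λ)·e^{λ−1}. -/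
theorem stmt_17 (l t : ℝ) (hl : l ∈ Set.Icc (0 : ℝ) 1) (ht : t ∈ Set.Icc (0 : ℝ) 1)
    (g : ℝ → ℝ)
    (hg : ∀ z, g z = if z < l then Real.exp (l - 1) else Real.exp (z - 1)) :
    (∫ z in (0 : ℝ)..(max t l), g z) + (1 - g t) ≥ 1 - (1 - l) * Real.exp (l - 1) := by
  obtain ⟨hl0, hl1⟩ := hl
  obtain ⟨ht0, ht1⟩ := ht
  have hcong : ∀ a b : ℝ, 0 ≤ a → b ≤ l → a ≤ b →
      (∫ z in a..b, g z) = (b - a) * Real.exp (l - 1) := by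
    intro a b ha hb hab
    have : (∫ z in a..b, g z) = ∫ z in a..b, Real.exp (l - 1) := by
      apply intervalIntegral.integral_congr
      intro z hz
      rw [Set.uIcc_of_le hab] at hz
      rw [hg]
      rcases lt_or_ge z l with h2 | h2
      · simp [h2]
      · have : z = l := le_antisymm (hz.2.trans hb) h2
        simp [this]
    rw [this, intervalIntegral.integral_const, smul_eq_mul]
  have hgeq : g = fun z => max (Real.exp (l - 1)) (Real.exp (z - 1)) := by
    funext z
    rw [hg]
    split_ifs with h
    · exact (max_eq_left (Real.exp_le_exp.mpr (by linarith))).symm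
    · exact (max_eq_right (Real.exp_le_exp.mpr (by linarith [not_lt.mp h]))).symm
  have hcont : Continuous g := by
    rw [hgeq]
    exact continuous_const.max (Real.continuous_exp.comp (continuous_sub_right 1))
  rcases lt_or_ge t l with h | h
  · rw [max_eq_right h.le, hcong 0 l le_rfl le_rfl hl0, hg t, if_pos h]
    nlinarith [Real.exp_pos (l - 1)]
  · rw [max_eq_left h]
    have hsplit : (∫ z in (0:ℝ)..t, g z) = (∫ z in (0:ℝ)..l, g z) + ∫ z in l..t, g z :=
      (intervalIntegral.integral_add_adjacent_intervals
        (hcont.intervalIntegrable 0 l) (hcont.intervalIntegrable l t)).symm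
    have h2 : (∫ z in l..t, g z) = Real.exp (t - 1) - Real.exp (l - 1) := by
      have : (∫ z in l..t, g z) = ∫ z in l..t, Real.exp (z - 1) := by
        apply intervalIntegral.integral_congr
        intro z hz
        rw [Set.uIcc_of_le h] at hz
        rw [hg, if_neg (not_lt.mpr hz.1)]
      rw [this, intervalIntegral.integral_comp_sub_right (fun x => Real.exp x) 1,
        integral_exp]
    rw [hsplit, hcong 0 l le_rfl le_rfl hl0, h2, hg t, if_neg (not_lt.mpr h)]
    nlinarith [Real.exp_pos (l - 1)]
end
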